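/- Let R be a Dedekind domain and H a Hopf algebra over R which is projective as an R-module and possesses a non-zero left integral. Then H has enough integrals: the R-linear evaluation map I^l_H ⊗_R H → R, φ ⊗ h ↦ φ(h), is surjective; equivalently, there exist finitely many left integrals φ_i and elements h_i ∈ H with ∑ φ_i(h_i) = 1. -/
import Mathlib



open TensorProduct

section Integrals

variable (R H : Type*) [CommRing R] [Ring H] [HopfAlgebra R H]

/-- A left integral on the Hopf algebra `H`: an `R`-linear map `φ : H → R` with
`∑ h₁ φ(h₂) = φ(h) • 1` for all `h`. -/
def IsLeftIntegral (φ : H →ₗ[R] R) : Prop :=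
  ∀ h : H, (TensorProduct.rid R H) ((LinearMap.lTensor H φ) (Coalgebra.comul h)) =
    φ h • (1 : H)

/-- A right integral on the Hopf algebra `H`: an `R`-linear map `φ : H → R` with
`∑ φ(h₁) h₂ = φ(h) • 1` for all `h`. -/
def IsRightIntegral (φ : H →ₗ[R] R) : Prop :=
  ∀ h : H, (TensorProduct.lid R H) ((LinearMap.rTensor H φ) (Coalgebra.comul h)) =
    φ h • (1 : H)

/-- The `R`-module `I^l_H` of left integrals on `H`. -/
noncomputable def leftIntegrals : Submodule R (H →ₗ[R] R) where
  carrier := {φ | IsLeftIntegral R H φ}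
  add_mem' := fun {φ} {ψ} hφ hψ h => by
    simp only [LinearMap.lTensor_add, LinearMap.add_apply, map_add, hφ h, hψ h,
      LinearMap.add_apply, add_smul]
  zero_mem' := fun h => by
    simp [LinearMap.lTensor_zero]
  smul_mem' := fun r φ hφ h => by
    simp only [LinearMap.lTensor_smul, LinearMap.smul_apply, map_smul, hφ h, smul_assoc]
end Integrals

-- aux lemma: divide an integral by a scalar
lemma exists_integral_div {R H : Type*} [CommRing R] [IsDomain R] [Ring H] [HopfAlgebra R H]
    [NoZeroSMulDivisors R H]
    {a b : R} (ha : a ≠ 0) (φ : H →ₗ[R] R) (hφ : IsLeftIntegral R H φ)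
    (hdvd : ∀ h, a ∣ b * φ h) :
    ∃ ψ : H →ₗ[R] R, IsLeftIntegral R H ψ ∧ ∀ h, b * φ h = a * ψ h := by
  classical
  set f : R →ₗ[R] R := LinearMap.lsmul R R a with hf
  have hfinj : Function.Injective f := fun x y hxy => by
    simpa using mul_left_cancel₀ ha (by simpa [f, smul_eq_mul] using hxy)
  have hmem : ∀ h : H, (b • φ) h ∈ LinearMap.range f := by
    intro h
    obtain ⟨c, hc⟩ := hdvd h
    exact ⟨c, by simp [f, smul_eq_mul, hc.symm]⟩
  set e : R ≃ₗ[R] LinearMap.range f := LinearEquiv.ofInjective f hfinj with he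
  set g : H →ₗ[R] LinearMap.range f := LinearMap.codRestrict _ (b • φ) hmem with hg
  set ψ : H →ₗ[R] R := e.symm.toLinearMap ∘ₗ g with hψ
  have hp : ∀ h, a * ψ h = b * φ h := by
    intro h
    have h1 : e (ψ h) = g h := by simp [ψ]
    have h2 : (e (ψ h) : R) = f (ψ h) := by
      simp [e, LinearEquiv.ofInjective_apply]
    have h3 : ((g h : R)) = b * φ h := by simp [g, smul_eq_mul]
    rw [← h3, ← h1, h2]; simp [f, smul_eq_mul]
  refine ⟨ψ, ?_, fun h => (hp h).symm⟩
  intro h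
  have haψ : a • ψ = b • φ := LinearMap.ext fun x => by
    simpa [smul_eq_mul] using hp x
  have key : a • ((TensorProduct.rid R H) ((LinearMap.lTensor H ψ) (Coalgebra.comul h))) =
      a • (ψ h • (1 : H)) := by
    calc a • ((TensorProduct.rid R H) ((LinearMap.lTensor H ψ) (Coalgebra.comul h)))
        = (TensorProduct.rid R H) ((LinearMap.lTensor H (a • ψ)) (Coalgebra.comul h)) := by
          rw [LinearMap.lTensor_smul, LinearMap.smul_apply, map_smul]
      _ = (TensorProduct.rid R H) ((LinearMap.lTensor H (b • φ)) (Coalgebra.comul h)) := by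
          rw [haψ]
      _ = b • ((TensorProduct.rid R H) ((LinearMap.lTensor H φ) (Coalgebra.comul h))) := by
          rw [LinearMap.lTensor_smul, LinearMap.smul_apply, map_smul]
      _ = b • (φ h • (1 : H)) := by rw [hφ h]
      _ = (b * φ h) • (1 : H) := smul_smul _ _ _
      _ = (a * ψ h) • (1 : H) := by rw [hp h]
      _ = a • (ψ h • (1 : H)) := (smul_smul _ _ _).symm
  exact smul_right_injective H ha key

/-- **Corollary.** Let `R` be a Dedekind domain and `H` a Hopf algebra over `R`
which is projective as an `R`-module and possesses a non-zero left integral.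
Then `H` has enough integrals: the evaluation map `I^l_H ⊗_R H → R`,
`φ ⊗ h ↦ φ(h)`, is surjective. -/
theorem enough_integrals
    (R H : Type*) [CommRing R] [IsDomain R] [IsDedekindDomain R]
    [Ring H] [HopfAlgebra R H] [Module.Projective R H]
    (hne : ∃ φ : H →ₗ[R] R, φ ≠ 0 ∧ IsLeftIntegral R H φ) :
    Function.Surjective (TensorProduct.lift (leftIntegrals R H).subtype) := by
  classical
  -- H is torsion-free
  haveI : NoZeroSMulDivisors R H := by
    obtain ⟨s, hs⟩ := Module.projective_def.mp (inferInstance : Module.Projective R H)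
    refine ⟨fun {c x} hcx => ?_⟩
    have : c • s x = 0 := by rw [← map_smul, hcx, map_zero]
    rcases smul_eq_zero.mp this with hc | hx
    · exact Or.inl hc
    · exact Or.inr (by rw [← hs x, hx, map_zero])
  obtain ⟨φ₀, hφ₀ne, hφ₀⟩ := hne
  rw [← LinearMap.range_eq_top]
  set ev := TensorProduct.lift (leftIntegrals R H).subtype with hev
  set J : Ideal R := LinearMap.range ev with hJdef
  -- membership helper
  have hmemJ : ∀ (φ : H →ₗ[R] R), IsLeftIntegral R H φ → ∀ h : H, φ h ∈ J := by
    intro φ hφ h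
    exact ⟨(⟨φ, hφ⟩ : leftIntegrals R H) ⊗ₜ[R] h, by simp [ev]⟩
  obtain ⟨h₀, hh₀⟩ : ∃ h, φ₀ h ≠ 0 := by
    by_contra hc
    push_neg at hc
    exact hφ₀ne (LinearMap.ext fun h => hc h)
  set a : R := φ₀ h₀ with ha
  have haJ : a ∈ J := hmemJ φ₀ hφ₀ h₀
  have hle : Ideal.span {a} ≤ J := (Ideal.span_singleton_le_iff_mem J).mpr haJ
  obtain ⟨J', hJ'⟩ : J ∣ Ideal.span {a} := Ideal.dvd_iff_le.mpr hle
  -- key containment : J' * J ≤ span{a} * J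
  have key : J' * J ≤ Ideal.span {a} * J := by
    refine Ideal.mul_le.mpr fun b hb x hx => ?_
    obtain ⟨t, rfl⟩ := hx
    induction t using TensorProduct.induction_on with
    | zero => simp only [map_zero, mul_zero]; exact Submodule.zero_mem _
    | tmul φ h =>
        have hφ : IsLeftIntegral R H (φ : H →ₗ[R] R) := φ.2
        have hdvd : ∀ k : H, a ∣ b * (φ : H →ₗ[R] R) k := by
          intro k
          have : b * (φ : H →ₗ[R] R) k ∈ J' * J :=
            Ideal.mul_mem_mul hb (hmemJ _ hφ k)
          rw [mul_comm J' J, ← hJ', Ideal.mem_span_singleton] at this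
          exact this
        obtain ⟨ψ, hψint, hψ⟩ := exists_integral_div hh₀ _ hφ hdvd
        have : ev ((φ : leftIntegrals R H) ⊗ₜ[R] h) = (φ : H →ₗ[R] R) h := by
          simp [ev]
        rw [this, hψ h]
        exact Ideal.mul_mem_mul (Ideal.mem_span_singleton_self a) (hmemJ ψ hψint h)
    | add t₁ t₂ ih₁ ih₂ =>
        rw [map_add, mul_add]
        exact Submodule.add_mem _ ih₁ ih₂
  -- conclude 1 ∈ J
  have hsub : Ideal.span {a} ≤ Ideal.span {a} * J := by
    conv_lhs => rw [hJ', mul_comm J J']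
    exact key
  have h1 : (1 : R) ∈ J := by
    have := hsub (Ideal.mem_span_singleton_self a)
    rw [Ideal.mem_span_singleton_mul] at this
    obtain ⟨y, hyJ, hy⟩ := this
    have : y = 1 := by
      apply mul_left_cancel₀ hh₀
      rw [hy, mul_one]
    rwa [← this]
  rw [eq_top_iff]
  intro x _
  simpa using J.smul_mem x h1
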